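/- If A ⊇ B is an H-separable extension, then for every right A-module N there exist natural (in N) A-module maps τ_N : N ⊗_B A → N^n and σ_N : N^n → N ⊗_B A with σ_N ∘ τ_N = id, i.e., induction-after-restriction of N is naturally a direct summand of N^n. -/

import Mathlib

/-!  A noncommutative relative tensor product `L ⊗_C R` for a ring `C` mapping
into rings `L` (acting on the right through `f`) and `R` (acting on the left
through `g`), together with the outer left `L`-action `lact`, the outer right
`R`-action `ract`, a lifting principle for balanced biadditive maps, and the
multiplication map. -/

open scoped TensorProduct

noncomputable section
namespace NCT

variable {C L R : Type*} [Ring C] [Ring L] [Ring R]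

/-- The submodule of relations `(l * f c) ⊗ r - l ⊗ (g c * r)`. -/
def rel (f : C →+* L) (g : C →+* R) : Submodule ℤ (L ⊗[ℤ] R) :=
  Submodule.span ℤ
    {x | ∃ (l : L) (c : C) (r : R), x = (l * f c) ⊗ₜ[ℤ] r - l ⊗ₜ[ℤ] (g c * r)}

/-- The relative tensor product `L ⊗_C R`. -/
def Tens (f : C →+* L) (g : C →+* R) : Type _ := (L ⊗[ℤ] R) ⧸ rel f g

instance (f : C →+* L) (g : C →+* R) : AddCommGroup (Tens f g) :=
  inferInstanceAs (AddCommGroup ((L ⊗[ℤ] R) ⧸ rel f g))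

variable (f : C →+* L) (g : C →+* R)

/-- The canonical image of `l ⊗ r` in `L ⊗_C R`. -/
def tmul (l : L) (r : R) : Tens f g := Submodule.Quotient.mk (l ⊗ₜ[ℤ] r)

lemma tmul_rel (l : L) (c : C) (r : R) :
    tmul f g (l * f c) r = tmul f g l (g c * r) := by
  refine (Submodule.Quotient.eq _).2 ?_
  exact Submodule.subset_span ⟨l, c, r, rfl⟩

lemma tmul_add_left (l l' : L) (r : R) :
    tmul f g (l + l') r = tmul f g l r + tmul f g l' r := by
  show Submodule.Quotient.mk _ = _
  rw [TensorProduct.add_tmul, Submodule.Quotient.mk_add]; rfl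

lemma tmul_add_right (l : L) (r r' : R) :
    tmul f g l (r + r') = tmul f g l r + tmul f g l r' := by
  show Submodule.Quotient.mk _ = _
  rw [TensorProduct.tmul_add, Submodule.Quotient.mk_add]; rfl

/-- Package a biadditive map as a bundled `AddMonoidHom`-valued hom. -/
def mkBilin {M N P : Type*} [AddCommGroup M] [AddCommGroup N] [AddCommGroup P]
    (φ : M → N → P)
    (h1 : ∀ m m' n, φ (m + m') n = φ m n + φ m' n)
    (h2 : ∀ m n n', φ m (n + n') = φ m n + φ m n') : M →+ N →+ P :=
  AddMonoidHom.mk' (fun m => AddMonoidHom.mk' (φ m) (h2 m))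
    (fun m m' => by ext n; exact h1 m m' n)

@[simp] lemma mkBilin_apply {M N P : Type*} [AddCommGroup M] [AddCommGroup N] [AddCommGroup P]
    (φ : M → N → P) (h1 h2) (m : M) (n : N) : mkBilin φ h1 h2 m n = φ m n := rfl

/-- Lift a balanced biadditive map to the relative tensor product. -/
def lift {P : Type*} [AddCommGroup P] (φ : L →+ R →+ P)
    (hbal : ∀ l c r, φ (l * f c) r = φ l (g c * r)) : Tens f g →+ P :=
  (Submodule.liftQ (rel f g)
    (TensorProduct.liftAddHom φ (by
      intro n l r
      simp only [AddMonoidHom.map_zsmul, AddMonoidHom.smul_apply]) ).toIntLinearMap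
    (by
      rw [rel, Submodule.span_le]
      rintro x ⟨l, c, r, rfl⟩
      simp only [SetLike.mem_coe, LinearMap.mem_ker, AddMonoidHom.coe_toIntLinearMap,
        map_sub, TensorProduct.liftAddHom_tmul]
      rw [hbal, sub_self])).toAddMonoidHom

@[simp] lemma lift_tmul {P : Type*} [AddCommGroup P] (φ : L →+ R →+ P)
    (hbal : ∀ l c r, φ (l * f c) r = φ l (g c * r)) (l : L) (r : R) :
    lift f g φ hbal (tmul f g l r) = φ l r := rfl

/-- The outer left action of `L` on `L ⊗_C R`. -/
def lact (l : L) : Tens f g →+ Tens f g :=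
  lift f g (mkBilin (fun l' r => tmul f g (l * l') r)
      (fun a b r => by rw [mul_add, tmul_add_left])
      (fun a r s => by rw [tmul_add_right]))
    (fun l' c r => by simp only [mkBilin_apply]; rw [← mul_assoc, tmul_rel])

@[simp] lemma lact_tmul (l l' : L) (r : R) :
    lact f g l (tmul f g l' r) = tmul f g (l * l') r := rfl

/-- The outer right action of `R` on `L ⊗_C R`. -/
def ract (r : R) : Tens f g →+ Tens f g :=
  lift f g (mkBilin (fun l' r' => tmul f g l' (r' * r))
      (fun a b r' => by rw [tmul_add_left])
      (fun a r' s => by rw [add_mul, tmul_add_right]))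
    (fun l' c r' => by simp only [mkBilin_apply]; rw [tmul_rel, mul_assoc])

@[simp] lemma ract_tmul (r r' : R) (l : L) :
    ract f g r (tmul f g l r') = tmul f g l (r' * r) := rfl

/-- The map induced on relative tensor products by a ring map on the left factor. -/
def mapLeft {L' : Type*} [Ring L'] (h : L →+* L') :
    Tens f g →+ Tens (h.comp f) g :=
  lift f g (mkBilin (fun l r => tmul (h.comp f) g (h l) r)
      (fun a b r => by rw [map_add, tmul_add_left])
      (fun a r s => by rw [tmul_add_right]))
    (fun l c r => by
      simp only [mkBilin_apply, map_mul]
      exact tmul_rel (h.comp f) g (h l) c r)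

@[simp] lemma mapLeft_tmul {L' : Type*} [Ring L'] (h : L →+* L') (l : L) (r : R) :
    mapLeft f g h (tmul f g l r) = tmul (h.comp f) g (h l) r := rfl

/-- The multiplication map `L ⊗_C R → R`, `l ⊗ r ↦ jl l * r`, for a ring map
`jl : L → R` compatible with the two maps from `C`. -/
def mulMap (jl : L →+* R) (hcomp : ∀ c, jl (f c) = g c) : Tens f g →+ R :=
  lift f g (mkBilin (fun l r => jl l * r)
      (fun a b r => by rw [map_add, add_mul])
      (fun a r s => by rw [mul_add]))
    (fun l c r => by simp only [mkBilin_apply]; rw [map_mul, hcomp, mul_assoc])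

@[simp] lemma mulMap_tmul (jl : L →+* R) (hcomp : ∀ c, jl (f c) = g c) (l : L) (r : R) :
    mulMap f g jl hcomp (tmul f g l r) = jl l * r := rfl

/-- Induction principle: every element of `L ⊗_C R` is built from `tmul`s. -/
lemma tens_induction {p : Tens f g → Prop} (zero : p 0)
    (tm : ∀ l r, p (tmul f g l r)) (add : ∀ x y, p x → p y → p (x + y)) :
    ∀ x, p x := by
  intro x
  obtain ⟨y, rfl⟩ := Submodule.Quotient.mk_surjective _ x
  induction y using TensorProduct.induction_on with
  | zero => exact zero
  | tmul l r => exact tm l r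
  | add a b ha hb =>
      rw [Submodule.Quotient.mk_add]
      exact add _ _ ha hb

end NCT
end

noncomputable section
open NCT

/-- The tower `A ⊇ B ⊇ C` (given by injective ring maps `ι : C → B`, `j : B → A`) is
*left relative H-separable*: `B ⊗_C A ⊕ * ≅ A^n` as `B`-`A`-bimodules. -/
def LeftRelHSep {C B A : Type*} [Ring C] [Ring B] [Ring A]
    (ι : C →+* B) (j : B →+* A) (n : ℕ) : Prop :=
  ∃ (i : Tens ι (j.comp ι) →+ (Fin n → A)) (p : (Fin n → A) →+ Tens ι (j.comp ι)),
    (∀ (b : B) x, i (lact ι (j.comp ι) b x) = fun k => j b * i x k) ∧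
    (∀ (a : A) x, i (ract ι (j.comp ι) a x) = fun k => i x k * a) ∧
    (∀ (b : B) v, p (fun k => j b * v k) = lact ι (j.comp ι) b (p v)) ∧
    (∀ (a : A) v, p (fun k => v k * a) = ract ι (j.comp ι) a (p v)) ∧
    ∀ x, p (i x) = x

/-- `B` is a *left relative separable extension of `C` in `A`*: the multiplication map
`μ : B ⊗_C A → A` splits as a `B`-`A`-bimodule epimorphism. -/
def LeftRelSep {C B A : Type*} [Ring C] [Ring B] [Ring A]
    (ι : C →+* B) (j : B →+* A) : Prop :=
  ∃ σ : A →+ Tens ι (j.comp ι),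
    (∀ (b : B) (a : A), σ (j b * a) = lact ι (j.comp ι) b (σ a)) ∧
    (∀ (a a' : A), σ (a * a') = ract ι (j.comp ι) a' (σ a)) ∧
    ∀ a, mulMap ι (j.comp ι) j (fun _ => rfl) (σ a) = a

/-- `B ⊇ C` is a separable extension: there is a `B`-central element
`e ∈ B ⊗_C B` with `μ(e) = 1`. -/
def IsSepExt {C B : Type*} [Ring C] [Ring B] (ι : C →+* B) : Prop :=
  ∃ e : Tens ι ι, (∀ b : B, lact ι ι b e = ract ι ι b e) ∧
    mulMap ι ι (RingHom.id B) (fun _ => rfl) e = 1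

section ModuleTensor

open MulOpposite

variable {B A : Type*} [Ring B] [Ring A] (j : B →+* A)
variable (N : Type*) [AddCommGroup N] [Module Aᵐᵒᵖ N]

/-- Relations for `N ⊗_B A`, `N` a right `A`-module restricted to `B`. -/
def mrel : Submodule ℤ (N ⊗[ℤ] A) :=
  Submodule.span ℤ {x | ∃ (nn : N) (b : B) (a : A),
    x = (op (j b) • nn) ⊗ₜ[ℤ] a - nn ⊗ₜ[ℤ] (j b * a)}

/-- `N ⊗_B A` for a right `A`-module `N`. -/
def MTens : Type _ := (N ⊗[ℤ] A) ⧸ mrel j N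

instance : AddCommGroup (MTens j N) :=
  inferInstanceAs (AddCommGroup ((N ⊗[ℤ] A) ⧸ mrel j N))

def mtmul (nn : N) (a : A) : MTens j N := Submodule.Quotient.mk (nn ⊗ₜ[ℤ] a)

lemma mtmul_rel (nn : N) (b : B) (a : A) :
    mtmul j N (op (j b) • nn) a = mtmul j N nn (j b * a) := by
  refine (Submodule.Quotient.eq _).2 ?_
  exact Submodule.subset_span ⟨nn, b, a, rfl⟩

lemma mtmul_add_left (nn nn' : N) (a : A) :
    mtmul j N (nn + nn') a = mtmul j N nn a + mtmul j N nn' a := by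
  show Submodule.Quotient.mk _ = _
  rw [TensorProduct.add_tmul, Submodule.Quotient.mk_add]; rfl

lemma mtmul_add_right (nn : N) (a a' : A) :
    mtmul j N nn (a + a') = mtmul j N nn a + mtmul j N nn a' := by
  show Submodule.Quotient.mk _ = _
  rw [TensorProduct.tmul_add, Submodule.Quotient.mk_add]; rfl

/-- Lift a balanced biadditive map on `N × A` to `N ⊗_B A`. -/
def mlift {P : Type*} [AddCommGroup P] (φ : N →+ A →+ P)
    (hbal : ∀ (nn : N) (b : B) (a : A), φ (op (j b) • nn) a = φ nn (j b * a)) :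
    MTens j N →+ P :=
  (Submodule.liftQ (mrel j N)
    (TensorProduct.liftAddHom φ (by
      intro n l r
      simp only [AddMonoidHom.map_zsmul, AddMonoidHom.smul_apply])).toIntLinearMap
    (by
      rw [mrel, Submodule.span_le]
      rintro x ⟨nn, b, a, rfl⟩
      simp only [SetLike.mem_coe, LinearMap.mem_ker, AddMonoidHom.coe_toIntLinearMap,
        map_sub, TensorProduct.liftAddHom_tmul]
      rw [hbal, sub_self])).toAddMonoidHom

@[simp] lemma mlift_mtmul {P : Type*} [AddCommGroup P] (φ : N →+ A →+ P) (hbal)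
    (nn : N) (a : A) : mlift j N φ hbal (mtmul j N nn a) = φ nn a := rfl

/-- The right `A`-action on `N ⊗_B A` (through the right tensor factor). -/
def mract (a : A) : MTens j N →+ MTens j N :=
  mlift j N (mkBilin (fun nn a' => mtmul j N nn (a' * a))
      (fun x y a' => by rw [mtmul_add_left])
      (fun x a' a'' => by rw [add_mul, mtmul_add_right]))
    (fun nn b a' => by
      simp only [mkBilin_apply]
      rw [mtmul_rel, mul_assoc])

@[simp] lemma mract_mtmul (a : A) (nn : N) (a' : A) :
    mract j N a (mtmul j N nn a') = mtmul j N nn (a' * a) := rfl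

/-- The map `N ⊗_B A → N' ⊗_B A` induced by a right `A`-linear map `g : N → N'`. -/
def mmap {N' : Type*} [AddCommGroup N'] [Module Aᵐᵒᵖ N'] (g : N →+ N')
    (hg : ∀ (a : A) (nn : N), g (op a • nn) = op a • g nn) :
    MTens j N →+ MTens j N' :=
  mlift j N (mkBilin (fun nn a => mtmul j N' (g nn) a)
      (fun x y a => by rw [map_add, mtmul_add_left])
      (fun x a a' => by rw [mtmul_add_right]))
    (fun nn b a => by
      simp only [mkBilin_apply]
      rw [hg, mtmul_rel])

end ModuleTensor

/-- `A ⊇ B` is H-separable: `A ⊗_B A ⊕ * ≅ A^n` as `A`-`A`-bimodules. -/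
def IsHSep {B A : Type*} [Ring B] [Ring A] (j : B →+* A) : Prop :=
  ∃ (n : ℕ) (i : Tens j j →+ (Fin n → A)) (p : (Fin n → A) →+ Tens j j),
    (∀ (a : A) x, i (lact j j a x) = fun k => a * i x k) ∧
    (∀ (a : A) x, i (ract j j a x) = fun k => i x k * a) ∧
    (∀ (a : A) v, p (fun k => a * v k) = lact j j a (p v)) ∧
    (∀ (a : A) v, p (fun k => v k * a) = ract j j a (p v)) ∧
    ∀ x, p (i x) = x


/-! An H-separability system `1 ⊗ 1 = Σ r_k e_k` (with `r_k ∈ A^B` and `e_k ∈ (A ⊗_B A)^A`)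
is read off the splitting `p ∘ i = id` as `r = i (1 ⊗ 1)` and `e_k = p (δ_k)`. Elements
`e ∈ A ⊗_B A` act on `N ⊗_B A` through `m ⊗ (x ⊗ y) ↦ m x ⊗ y`; then
`τ (m ⊗ a) = (m r_k a)_k` and `σ (m_k)_k = Σ m_k e_k` are natural and right `A`-linear because
the `e_k` are central, and `σ (τ (m ⊗ a)) = m (Σ r_k e_k) a = m (1 ⊗ 1) a = m ⊗ a`. -/

open MulOpposite

namespace NCT

variable {C L R : Type*} [Ring C] [Ring L] [Ring R] (f : C →+* L) (g : C →+* R)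

lemma lact_lact (l l' : L) (x : Tens f g) :
    lact f g l (lact f g l' x) = lact f g (l * l') x := by
  induction x using tens_induction with
  | zero => simp only [map_zero]
  | tm l'' r => simp only [lact_tmul, mul_assoc]
  | add x y hx hy => simp only [map_add, hx, hy]

lemma lact_ract_comm (l : L) (r : R) (x : Tens f g) :
    lact f g l (ract f g r x) = ract f g r (lact f g l x) := by
  induction x using tens_induction with
  | zero => simp only [map_zero]
  | tm l' r' => simp only [lact_tmul, ract_tmul]
  | add x y hx hy => simp only [map_add, hx, hy]

lemma lact_tmul_one_one_eq_ract (c : C) :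
    lact f g (f c) (tmul f g 1 1) = ract f g (g c) (tmul f g 1 1) := by
  rw [lact_tmul, ract_tmul, mul_one, one_mul, ← one_mul (f c), tmul_rel, mul_one]

end NCT

section ModuleTensor

variable {B A : Type*} [Ring B] [Ring A] (j : B →+* A)
variable (N : Type*) [AddCommGroup N] [Module Aᵐᵒᵖ N]

lemma mtens_induction {p : MTens j N → Prop} (zero : p 0)
    (tm : ∀ m a, p (mtmul j N m a)) (add : ∀ x y, p x → p y → p (x + y)) : ∀ x, p x := by
  intro x
  obtain ⟨y, rfl⟩ := Submodule.Quotient.mk_surjective _ x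
  induction y using TensorProduct.induction_on with
  | zero => exact zero
  | tmul m a => exact tm m a
  | add x y hx hy =>
      rw [Submodule.Quotient.mk_add]
      exact add _ _ hx hy

@[simp] lemma mmap_mtmul {N' : Type*} [AddCommGroup N'] [Module Aᵐᵒᵖ N'] (g : N →+ N')
    (hg : ∀ (a : A) (m : N), g (op a • m) = op a • g m) (m : N) (a : A) :
    mmap j N g hg (mtmul j N m a) = mtmul j N' (g m) a := rfl

def actOn (m : N) : Tens j j →+ MTens j N :=
  lift j j (mkBilin (fun x y => mtmul j N (op x • m) y)
      (fun x x' y => by rw [op_add, add_smul, mtmul_add_left])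
      (fun x y y' => by rw [mtmul_add_right]))
    (fun x b y => by
      simp only [mkBilin_apply]
      rw [op_mul, mul_smul]
      exact mtmul_rel j N (op x • m) b y)

@[simp] lemma actOn_tmul (m : N) (x y : A) :
    actOn j N m (tmul j j x y) = mtmul j N (op x • m) y := rfl

variable {N}

lemma actOn_add (m m' : N) (e : Tens j j) :
    actOn j N (m + m') e = actOn j N m e + actOn j N m' e := by
  induction e using tens_induction with
  | zero => simp only [map_zero, add_zero]
  | tm x y => simp only [actOn_tmul, smul_add, mtmul_add_left]
  | add e e' he he' => simp only [map_add, he, he']; abel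

lemma actOn_smul (m : N) (a : A) (e : Tens j j) :
    actOn j N (op a • m) e = actOn j N m (lact j j a e) := by
  induction e using tens_induction with
  | zero => simp only [map_zero]
  | tm x y => simp only [actOn_tmul, lact_tmul, smul_smul, ← op_mul]
  | add e e' he he' => simp only [map_add, he, he']

lemma actOn_ract (m : N) (a : A) (e : Tens j j) :
    actOn j N m (ract j j a e) = mract j N a (actOn j N m e) := by
  induction e using tens_induction with
  | zero => simp only [map_zero]
  | tm x y => simp only [actOn_tmul, ract_tmul, mract_mtmul]
  | add e e' he he' => simp only [map_add, he, he']

lemma mmap_actOn {N' : Type*} [AddCommGroup N'] [Module Aᵐᵒᵖ N'] (g : N →+ N')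
    (hg : ∀ (a : A) (m : N), g (op a • m) = op a • g m) (m : N) (e : Tens j j) :
    mmap j N g hg (actOn j N m e) = actOn j N' (g m) e := by
  induction e using tens_induction with
  | zero => simp only [map_zero]
  | tm x y => simp only [actOn_tmul, mmap_mtmul, hg]
  | add e e' he he' => simp only [map_add, he, he']

end ModuleTensor

structure HSepSystem {B A : Type*} [Ring B] [Ring A] (j : B →+* A) (n : ℕ) where
  r : Fin n → A
  e : Fin n → Tens j j
  r_comm : ∀ (b : B) k, j b * r k = r k * j b
  e_central : ∀ (a : A) k, lact j j a (e k) = ract j j a (e k)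
  tmul_one_one_eq_sum : tmul j j 1 1 = ∑ k, lact j j (r k) (e k)

theorem IsHSep.exists_hSepSystem {B A : Type*} [Ring B] [Ring A] {j : B →+* A}
    (h : IsHSep j) : ∃ n, Nonempty (HSepSystem j n) := by
  obtain ⟨n, i, p, hil, hir, hpl, hpr, hpi⟩ := h
  have mul_single : ∀ (a : A) k,
      (fun l => a * (Pi.single k 1 : Fin n → A) l) = Pi.single k a := fun a k => by
    funext l; rw [Pi.apply_single (fun _ => (a * ·)) (fun _ => mul_zero a), mul_one]
  have single_mul : ∀ (a : A) k,
      (fun l => (Pi.single k 1 : Fin n → A) l * a) = Pi.single k a := fun a k => by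
    funext l; rw [Pi.apply_single (fun _ => (· * a)) (fun _ => zero_mul a), one_mul]
  refine ⟨n, ⟨i (tmul j j 1 1), fun k => p (Pi.single k 1),
    fun b k => ?_, fun a k => ?_, ?_⟩⟩
  · have := congrArg i (lact_tmul_one_one_eq_ract j j b)
    rw [hil, hir] at this
    exact congrFun this k
  · rw [← hpl, ← hpr, mul_single, single_mul]
  · conv_lhs => rw [← hpi (tmul j j 1 1), ← Finset.univ_sum_single (i _), map_sum]
    simp only [← hpl, mul_single]

namespace HSepSystem

variable {B A : Type*} [Ring B] [Ring A] {j : B →+* A} {n : ℕ} (S : HSepSystem j n)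
variable (N : Type*) [AddCommGroup N] [Module Aᵐᵒᵖ N]

def tau : MTens j N →+ (Fin n → N) :=
  mlift j N (mkBilin (fun m a k => op (S.r k * a) • m)
      (fun m m' a => by funext k; exact smul_add _ _ _)
      (fun m a a' => by funext k; rw [mul_add, op_add, add_smul]; rfl))
    (fun m b a => by
      funext k
      simp only [mkBilin_apply]
      rw [smul_smul, ← op_mul, ← mul_assoc, S.r_comm, mul_assoc])

@[simp] lemma tau_mtmul (m : N) (a : A) :
    S.tau N (mtmul j N m a) = fun k => op (S.r k * a) • m := rfl

def sigma : (Fin n → N) →+ MTens j N :=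
  AddMonoidHom.mk' (fun v => ∑ k, actOn j N (v k) (S.e k))
    (fun v w => by simp only [Pi.add_apply, actOn_add, Finset.sum_add_distrib])

lemma sigma_apply (v : Fin n → N) : S.sigma N v = ∑ k, actOn j N (v k) (S.e k) := rfl

variable {N}

lemma tau_mract (a : A) (x : MTens j N) :
    S.tau N (mract j N a x) = fun k => op a • S.tau N x k := by
  induction x using mtens_induction with
  | zero => funext k; simp only [map_zero, Pi.zero_apply, smul_zero]
  | tm m a' => funext k; simp only [mract_mtmul, tau_mtmul, smul_smul, ← op_mul, mul_assoc]
  | add x y hx hy => funext k; simp only [map_add, Pi.add_apply, hx, hy, smul_add]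

lemma sigma_smul (a : A) (v : Fin n → N) :
    S.sigma N (fun k => op a • v k) = mract j N a (S.sigma N v) := by
  simp only [sigma_apply, map_sum, actOn_smul, S.e_central, actOn_ract]

lemma sigma_tau (x : MTens j N) : S.sigma N (S.tau N x) = x := by
  induction x using mtens_induction with
  | zero => simp only [map_zero]
  | tm m a =>
      calc S.sigma N (S.tau N (mtmul j N m a))
          = ∑ k, mract j N a (actOn j N m (lact j j (S.r k) (S.e k))) := by
            simp only [sigma_apply, tau_mtmul]
            refine Finset.sum_congr rfl fun k _ => ?_
            rw [actOn_smul, ← lact_lact, S.e_central, lact_ract_comm, actOn_ract]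
        _ = mract j N a (actOn j N m (tmul j j 1 1)) := by
            rw [S.tmul_one_one_eq_sum, map_sum, map_sum]
        _ = mtmul j N m a := by rw [actOn_tmul, op_one, one_smul, mract_mtmul, one_mul]
  | add x y hx hy => simp only [map_add, hx, hy]

variable {N' : Type*} [AddCommGroup N'] [Module Aᵐᵒᵖ N'] (g : N →+ N')
  (hg : ∀ (a : A) (m : N), g (op a • m) = op a • g m)

lemma tau_mmap (x : MTens j N) :
    S.tau N' (mmap j N g hg x) = fun k => g (S.tau N x k) := by
  induction x using mtens_induction with
  | zero => funext k; simp only [map_zero, Pi.zero_apply]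
  | tm m a => funext k; simp only [mmap_mtmul, tau_mtmul, hg]
  | add x y hx hy => funext k; simp only [map_add, Pi.add_apply, hx, hy]

lemma mmap_sigma (v : Fin n → N) :
    mmap j N g hg (S.sigma N v) = S.sigma N' fun k => g (v k) := by
  simp only [sigma_apply, map_sum, mmap_actOn]

end HSepSystem

theorem induced_restricted_natural_summand_general
    {B A : Type*} [Ring B] [Ring A] (j : B →+* A)
    (hHsep : IsHSep j) :
    ∃ (n : ℕ)
      (τ : ∀ (N : Type) [AddCommGroup N] [Module Aᵐᵒᵖ N], MTens j N →+ (Fin n → N))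
      (σ : ∀ (N : Type) [AddCommGroup N] [Module Aᵐᵒᵖ N], (Fin n → N) →+ MTens j N),
      (∀ (N : Type) [AddCommGroup N] [Module Aᵐᵒᵖ N] (a : A) (x : MTens j N),
        τ N (mract j N a x) = fun k => MulOpposite.op a • τ N x k) ∧
      (∀ (N : Type) [AddCommGroup N] [Module Aᵐᵒᵖ N] (a : A) (v : Fin n → N),
        σ N (fun k => MulOpposite.op a • v k) = mract j N a (σ N v)) ∧
      (∀ (N : Type) [AddCommGroup N] [Module Aᵐᵒᵖ N] (x : MTens j N),
        σ N (τ N x) = x) ∧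
      (∀ (N N' : Type) [AddCommGroup N] [Module Aᵐᵒᵖ N] [AddCommGroup N'] [Module Aᵐᵒᵖ N']
          (g : N →+ N') (hg : ∀ (a : A) (nn : N), g (MulOpposite.op a • nn) = MulOpposite.op a • g nn),
        (∀ x, τ N' (mmap j N g hg x) = fun k => g (τ N x k)) ∧
        (∀ v, mmap j N g hg (σ N v) = σ N' (fun k => g (v k)))) := by
  obtain ⟨n, ⟨S⟩⟩ := hHsep.exists_hSepSystem
  exact ⟨n, fun N _ _ => S.tau N, fun N _ _ => S.sigma N, fun N _ _ => S.tau_mract,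
    fun N _ _ => S.sigma_smul, fun N _ _ => S.sigma_tau,
    fun N N' _ _ _ _ g hg => ⟨S.tau_mmap g hg, S.mmap_sigma g hg⟩⟩

/-- if `A ⊇ B` is H-separable then, naturally in every right `A`-module
`N`, the induced module `N ⊗_B A` is a direct summand of `N^n` as right `A`-modules:
there are natural `A`-linear maps `τ_N : N ⊗_B A → N^n` and `σ_N : N^n → N ⊗_B A`
with `σ_N ∘ τ_N = id`. -/
theorem induced_restricted_natural_summand
    {B A : Type*} [Ring B] [Ring A] (j : B →+* A) (hj : Function.Injective j)
    (hHsep : IsHSep j) :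
    ∃ (n : ℕ)
      (τ : ∀ (N : Type) [AddCommGroup N] [Module Aᵐᵒᵖ N], MTens j N →+ (Fin n → N))
      (σ : ∀ (N : Type) [AddCommGroup N] [Module Aᵐᵒᵖ N], (Fin n → N) →+ MTens j N),
      (∀ (N : Type) [AddCommGroup N] [Module Aᵐᵒᵖ N] (a : A) (x : MTens j N),
        τ N (mract j N a x) = fun k => MulOpposite.op a • τ N x k) ∧
      (∀ (N : Type) [AddCommGroup N] [Module Aᵐᵒᵖ N] (a : A) (v : Fin n → N),
        σ N (fun k => MulOpposite.op a • v k) = mract j N a (σ N v)) ∧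
      (∀ (N : Type) [AddCommGroup N] [Module Aᵐᵒᵖ N] (x : MTens j N),
        σ N (τ N x) = x) ∧
      (∀ (N N' : Type) [AddCommGroup N] [Module Aᵐᵒᵖ N] [AddCommGroup N'] [Module Aᵐᵒᵖ N']
          (g : N →+ N') (hg : ∀ (a : A) (nn : N), g (MulOpposite.op a • nn) = MulOpposite.op a • g nn),
        (∀ x, τ N' (mmap j N g hg x) = fun k => g (τ N x k)) ∧
        (∀ v, mmap j N g hg (σ N v) = σ N' (fun k => g (v k)))) :=
  induced_restricted_natural_summand_general j hHsep
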